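/- arXiv:2408.09638 — 5 statements merged into one kernel-verified Lean document; each statement's English description precedes it below -/
import Mathlib

section
/- Let G be a locally compact second countable group with left Haar measure μ, let H be a separable complex Hilbert space, and let A, B : G → H be bounded weakly measurable maps (i.e. x ↦ ⟨A(x), v⟩ is Borel measurable for every v ∈ H, and sup_{x∈G} ‖A(x)‖ < ∞, sup_{y∈G} ‖B(y)‖ < ∞). Suppose φ : G → ℂ satisfies φ(y x⁻¹) = ⟨A(x), B(y)⟩ for all x, y ∈ G. Then for all f, g ∈ L²(G, μ) there exist sequences (fₙ)ₙ, (gₙ)ₙ in L²(G, μ) such that Σₙ ‖fₙ‖₂ ‖gₙ‖₂ ≤ (sup_{x} ‖A(x)‖)(sup_{y} ‖B(y)‖) ‖f‖₂ ‖g‖₂ and, for every x ∈ G, φ(x) · ∫_G f(x⁻¹y) · conj(g(y)) dμ(y) = Σₙ ∫_G fₙ(x⁻¹y) · conj(gₙ(y)) dμ(y), the series on the right converging absolutely. (In other words, φ multiplies every coefficient of the left regular representation into a sum of such coefficients with controlled norm.) -/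
/-!
Expand along a sequence `(bₙ)` with `⟪v, w⟫ = ∑ₙ ⟪v, bₙ⟫⟪bₙ, w⟫` (a Hilbert basis of the
separable space `H`): put `fₙ z = ⟪A z, bₙ⟫ f z` and `gₙ z = ⟪B z, bₙ⟫ g z`. Bessel's inequality
pointwise and integration give `∑ ‖fₙ‖² ≤ MA² ‖f‖²` and `∑ ‖gₙ‖² ≤ MB² ‖g‖²`, so Cauchy–Schwarz
bounds `∑ ‖fₙ‖ ‖gₙ‖`. For each `x` and `y`,
`∑ₙ fₙ (x⁻¹ y) conj (gₙ y) = f (x⁻¹ y) conj (g y) ⟪A (x⁻¹ y), B y⟫ = φ x f (x⁻¹ y) conj (g y)`,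
and the summable `L¹` bounds let the sum pass under the integral.
-/

open ComplexConjugate Filter Topology
open scoped ComplexInnerProductSpace Pointwise

universe u

/-- A factorization of length `d` of a function `φ : G → ℂ` consists of complex Hilbert
spaces `H 0, …, H d` with `H 0 = H d = ℂ` (witnessed by the linear isometric isomorphisms
`e0`, `ed`) together with bounded maps `xi i : G → B(H (i+1), H i)` such that
`φ (x 1 * ⋯ * x d)` equals `xi 1 (x 1) ∘ ⋯ ∘ xi d (x d)` applied to `1 ∈ ℂ = H d`,
read in `H 0 = ℂ`. -/
structure Factorization (d : ℕ) (G : Type*) [Group G] (φ : G → ℂ) where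
  H : Fin (d + 1) → Type u
  [normed : ∀ i, NormedAddCommGroup (H i)]
  [ips : ∀ i, InnerProductSpace ℂ (H i)]
  [complete : ∀ i, CompleteSpace (H i)]
  e0 : H 0 ≃ₗᵢ[ℂ] ℂ
  ed : H (Fin.last d) ≃ₗᵢ[ℂ] ℂ
  xi : ∀ i : Fin d, G → (H i.succ →L[ℂ] H i.castSucc)
  bdd : ∀ i : Fin d, ∃ M : ℝ, ∀ x : G, ‖xi i x‖ ≤ M
  factor : ∀ x : Fin d → G,
    φ (List.ofFn x).prod =
      e0 (Fin.reverseInduction (motive := fun i => H i) (ed.symm 1)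
        (fun j v => xi j (x j) v) 0)

attribute [instance] Factorization.normed Factorization.ips Factorization.complete

namespace Factorization

variable {d : ℕ} {G : Type*} [Group G] {φ : G → ℂ}

/-- The constant of a factorization, `∏ i, sup_x ‖xi i x‖`. -/
noncomputable def const (F : Factorization d G φ) : ℝ :=
  ∏ i : Fin d, ⨆ x : G, ‖F.xi i x‖

/-- The partial right product `xi (i+1) (x (i+1)) ⋯ xi d (x d) (1) ∈ H i`. -/
noncomputable def rightVec (F : Factorization d G φ) (x : Fin d → G) (i : Fin (d + 1)) :
    F.H i :=
  Fin.reverseInduction (motive := fun i => F.H i) (F.ed.symm 1)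
    (fun j v => F.xi j (x j) v) i

/-- The partial left product `(xi 1 (x 1) ⋯ xi i (x i))^* (1) ∈ H i`. -/
noncomputable def leftVec (F : Factorization d G φ) (x : Fin d → G) (i : Fin (d + 1)) :
    F.H i :=
  Fin.induction (motive := fun i => F.H i) (F.e0.symm 1)
    (fun j w => ContinuousLinearMap.adjoint (F.xi j (x j)) w) i

end Factorization

/-- `φ` is an `M_d`-multiplier: a bounded continuous function admitting a factorization
of length `d`. -/
def IsMdMultiplier (d : ℕ) {G : Type*} [Group G] [TopologicalSpace G] (φ : G → ℂ) : Prop :=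
  Continuous φ ∧ (∃ M : ℝ, ∀ x : G, ‖φ x‖ ≤ M) ∧ Nonempty (Factorization.{0} d G φ)

/-- The `M_d`-multiplier norm `‖φ‖_{M_d}`: the infimum of the constants over all
factorizations of length `d` of `φ`. -/
noncomputable def MdNorm (d : ℕ) {G : Type*} [Group G] (φ : G → ℂ) : ℝ :=
  sInf {C : ℝ | ∃ F : Factorization.{0} d G φ, F.const = C}

/-- A chain of bounded linear maps `eta i : L¹(G, μ) → B(K (i+1), K i)` between complex
Hilbert spaces `K 0, …, K d` with `K 0 = K d = ℂ`. -/
structure L1Chain (d : ℕ) {G : Type*} [Group G] [MeasurableSpace G]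
    (μ : MeasureTheory.Measure G) where
  K : Fin (d + 1) → Type u
  [normed : ∀ i, NormedAddCommGroup (K i)]
  [ips : ∀ i, InnerProductSpace ℂ (K i)]
  [complete : ∀ i, CompleteSpace (K i)]
  e0 : K 0 ≃ₗᵢ[ℂ] ℂ
  ed : K (Fin.last d) ≃ₗᵢ[ℂ] ℂ
  eta : ∀ i : Fin d, MeasureTheory.Lp ℂ 1 μ →L[ℂ] (K i.succ →L[ℂ] K i.castSucc)

attribute [instance] L1Chain.normed L1Chain.ips L1Chain.complete

open MeasureTheory

/-- Convolution of two functions on a group: `(f ∗ g) x = ∫ f y * g (y⁻¹ * x) dμ y`. -/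
noncomputable def conv {G : Type*} [Group G] [MeasurableSpace G] (μ : Measure G)
    (f g : G → ℂ) : G → ℂ :=
  fun x => ∫ y, f y * g (y⁻¹ * x) ∂μ

/-- Iterated convolution of a (nonempty) list of functions. -/
noncomputable def convProd {G : Type*} [Group G] [MeasurableSpace G] (μ : Measure G) :
    List (G → ℂ) → (G → ℂ)
  | [] => fun _ => 0
  | [f] => f
  | f :: g :: l => conv μ f (convProd μ (g :: l))

namespace L1Chain

variable {d : ℕ} {G : Type*} [Group G] [MeasurableSpace G] {μ : Measure G}

/-- The constant `∏ i, ‖eta i‖` of a chain. -/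
noncomputable def const (E : L1Chain d μ) : ℝ :=
  ∏ i : Fin d, ‖E.eta i‖

/-- The partial right product `eta (i+1) (f (i+1)) ⋯ eta d (f d) (1) ∈ K i`. -/
noncomputable def rightVec (E : L1Chain d μ) (f : Fin d → Lp ℂ 1 μ) (i : Fin (d + 1)) :
    E.K i :=
  Fin.reverseInduction (motive := fun i => E.K i) (E.ed.symm 1)
    (fun j v => E.eta j (f j) v) i

/-- The partial left product `(eta 1 (f 1) ⋯ eta i (f i))^* (1) ∈ K i`. -/
noncomputable def leftVec (E : L1Chain d μ) (f : Fin d → Lp ℂ 1 μ) (i : Fin (d + 1)) :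
    E.K i :=
  Fin.induction (motive := fun i => E.K i) (E.e0.symm 1)
    (fun j w => ContinuousLinearMap.adjoint (E.eta j (f j)) w) i

/-- The scalar `eta 1 (f 1) ⋯ eta d (f d) (1) ∈ ℂ`. -/
noncomputable def apply (E : L1Chain d μ) (f : Fin d → Lp ℂ 1 μ) : ℂ :=
  E.e0 (E.rightVec f 0)

end L1Chain

open scoped ENNReal InnerProductSpace

theorem summable_mul_of_sum_sq_le {ι : Type*} {p q : ι → ℝ} {S T : ℝ}
    (hp : ∀ i, 0 ≤ p i) (hq : ∀ i, 0 ≤ q i) (hS : 0 ≤ S) (hT : 0 ≤ T)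
    (hpS : ∀ s : Finset ι, ∑ i ∈ s, p i ^ 2 ≤ S ^ 2)
    (hqT : ∀ s : Finset ι, ∑ i ∈ s, q i ^ 2 ≤ T ^ 2) :
    Summable (fun i => p i * q i) ∧ ∑' i, p i * q i ≤ S * T := by
  have hpartial : ∀ s : Finset ι, ∑ i ∈ s, p i * q i ≤ S * T := fun s =>
    (Real.sum_mul_le_sqrt_mul_sqrt s p q).trans <| mul_le_mul
      ((Real.sqrt_le_left hS).2 (hpS s)) ((Real.sqrt_le_left hT).2 (hqT s))
      (Real.sqrt_nonneg _) hS
  exact ⟨summable_of_sum_le (fun i => mul_nonneg (hp i) (hq i)) hpartial,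
    tsum_le_of_sum_le' (mul_nonneg hS hT) hpartial⟩

section ParsevalSequence

variable {𝕜 E : Type*} [RCLike 𝕜] [NormedAddCommGroup E] [InnerProductSpace 𝕜 E]

theorem Orthonormal.countable [TopologicalSpace.SeparableSpace E] {ι : Type*} {v : ι → E}
    (hv : Orthonormal 𝕜 v) : Countable ι := by
  refine Pairwise.countable_of_isOpen_disjoint (s := fun i => Metric.ball (v i) (1 / 2))
    (fun i j hij => Metric.ball_disjoint_ball ?_) (fun _ => Metric.isOpen_ball)
    (fun _ => Metric.nonempty_ball.2 one_half_pos)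
  have hdist : dist (v i) (v j) ^ 2 = 2 := by
    rw [dist_eq_norm, @norm_sub_sq 𝕜, hv.1 i, hv.1 j, hv.2 hij]
    norm_num
  nlinarith [dist_nonneg (x := v i) (y := v j)]

variable (𝕜 E) in
/-- A countable Hilbert basis, padded with zeros to be indexed by `ℕ`. -/
theorem exists_seq_hasSum_inner_mul_inner [CompleteSpace E] [TopologicalSpace.SeparableSpace E] :
    ∃ b : ℕ → E, ∀ x y : E, HasSum (fun n => ⟪x, b n⟫_𝕜 * ⟪b n, y⟫_𝕜) ⟪x, y⟫_𝕜 := by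
  obtain ⟨w, b, -⟩ := exists_hilbertBasis 𝕜 E
  have := b.orthonormal.countable
  obtain ⟨e, he⟩ := Countable.exists_injective_nat w
  refine ⟨Function.extend e b 0, fun x y => ?_⟩
  convert (hasSum_extend_zero he).2 (b.hasSum_inner_mul_inner x y) using 2 with n
  rw [Function.apply_extend (fun v => ⟪x, v⟫_𝕜 * ⟪v, y⟫_𝕜)]
  simp [Function.comp_def, Pi.zero_def]

theorem sum_norm_inner_sq_le_of_hasSum {ι : Type*} {b : ι → E} {x : E}
    (hx : HasSum (fun i => ⟪x, b i⟫_𝕜 * ⟪b i, x⟫_𝕜) ⟪x, x⟫_𝕜) (s : Finset ι) :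
    ∑ i ∈ s, ‖⟪x, b i⟫_𝕜‖ ^ 2 ≤ ‖x‖ ^ 2 := by
  have hx' : HasSum (fun i => ‖⟪x, b i⟫_𝕜‖ ^ 2) (‖x‖ ^ 2) := by
    rw [← RCLike.hasSum_ofReal 𝕜]
    convert hx using 1
    · ext i
      rw [← inner_conj_symm x (b i), RCLike.conj_mul, RCLike.norm_conj]
      norm_cast
    · push_cast
      exact (inner_self_eq_norm_sq_to_K x).symm
  exact sum_le_hasSum s (fun _ _ => sq_nonneg _) hx'

end ParsevalSequence

namespace MeasureTheory.Lp

variable {α E 𝕜 : Type*} [MeasurableSpace α] {ν : Measure α} [NormedAddCommGroup E]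

theorem norm_two_eq_sqrt_integral (u : Lp E 2 ν) : ‖u‖ = √(∫ x, ‖u x‖ ^ 2 ∂ν) := by
  rw [Lp.norm_def, toReal_eLpNorm (Lp.aestronglyMeasurable u),
    lpNorm_eq_integral_norm_rpow_toReal two_ne_zero ENNReal.ofNat_ne_top
      (Lp.aestronglyMeasurable u), Real.sqrt_eq_rpow]
  norm_num

theorem norm_sq_eq_integral_norm_sq (u : Lp E 2 ν) : ‖u‖ ^ 2 = ∫ x, ‖u x‖ ^ 2 ∂ν := by
  rw [norm_two_eq_sqrt_integral, Real.sq_sqrt (integral_nonneg fun _ => by positivity)]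

theorem integral_norm_mul_norm_le (u v : Lp E 2 ν) : ∫ x, ‖u x‖ * ‖v x‖ ∂ν ≤ ‖u‖ * ‖v‖ := by
  simpa [norm_two_eq_sqrt_integral, Real.sqrt_eq_rpow] using
    integral_mul_norm_le_Lp_mul_Lq (μ := ν) Real.HolderConjugate.two_two
      (by simpa using Lp.memLp u) (by simpa using Lp.memLp v)

variable [NormedField 𝕜] [NormedSpace 𝕜 E]

theorem exists_ae_eq_smul_of_norm_le (f : Lp E 2 ν) {a : α → 𝕜}
    (ha : AEStronglyMeasurable a ν) {C : ℝ} (hC : ∀ x, ‖a x‖ ≤ C) :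
    ∃ u : Lp E 2 ν, u =ᵐ[ν] fun x => a x • f x :=
  ⟨((Lp.memLp f).smul (p := ∞) (memLp_top_of_bound ha C (.of_forall hC))).toLp _,
    MemLp.coeFn_toLp _⟩

theorem sum_norm_sq_le_of_ae_eq_smul {ι : Type*} (f : Lp E 2 ν) (a : ι → α → 𝕜)
    (u : ι → Lp E 2 ν) (hu : ∀ i, u i =ᵐ[ν] fun x => a i x • f x) {M : ℝ} (s : Finset ι)
    (hM : ∀ x, ∑ i ∈ s, ‖a i x‖ ^ 2 ≤ M) :
    ∑ i ∈ s, ‖u i‖ ^ 2 ≤ M * ‖f‖ ^ 2 := by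
  have hnorm : ∀ i, (fun x => ‖u i x‖ ^ 2) =ᵐ[ν] fun x => ‖a i x‖ ^ 2 * ‖f x‖ ^ 2 := fun i =>
    (hu i).mono fun x hx => by simp only [hx, norm_smul, mul_pow]
  have hint : ∀ i, Integrable (fun x => ‖a i x‖ ^ 2 * ‖f x‖ ^ 2) ν := fun i =>
    ((Lp.memLp (u i)).integrable_norm_pow two_ne_zero).congr (hnorm i)
  calc ∑ i ∈ s, ‖u i‖ ^ 2 = ∑ i ∈ s, ∫ x, ‖a i x‖ ^ 2 * ‖f x‖ ^ 2 ∂ν :=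
        Finset.sum_congr rfl fun i _ => by
          rw [norm_sq_eq_integral_norm_sq, integral_congr_ae (hnorm i)]
    _ = ∫ x, (∑ i ∈ s, ‖a i x‖ ^ 2) * ‖f x‖ ^ 2 ∂ν := by
        rw [← integral_finsetSum s fun i _ => hint i]
        simp only [Finset.sum_mul]
    _ ≤ ∫ x, M * ‖f x‖ ^ 2 ∂ν :=
        integral_mono_of_nonneg (.of_forall fun x => by positivity)
          (((Lp.memLp f).integrable_norm_pow two_ne_zero).const_mul M)
          (.of_forall fun x => mul_le_mul_of_nonneg_right (hM x) (by positivity))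
    _ = M * ‖f‖ ^ 2 := by rw [integral_const_mul, norm_sq_eq_integral_norm_sq]

end MeasureTheory.Lp

namespace MeasureTheory.MeasurePreserving

variable {α β : Type*} [MeasurableSpace α] [MeasurableSpace β] {ν : Measure α} {ν' : Measure β}
  {T : α → β}

theorem integrable_comp_mul_conj (hT : MeasurePreserving T ν ν') (u : Lp ℂ 2 ν')
    (v : Lp ℂ 2 ν) : Integrable (fun y => u (T y) * conj (v y)) ν := by
  refine (L2.integrable_inner (𝕜 := ℂ) v (Lp.compMeasurePreserving T hT u)).congr ?_
  filter_upwards [Lp.coeFn_compMeasurePreserving u hT] with y hy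
  rw [RCLike.inner_apply, hy, Function.comp_apply, mul_comm]

theorem integral_norm_comp_mul_conj_le (hT : MeasurePreserving T ν ν') (u : Lp ℂ 2 ν')
    (v : Lp ℂ 2 ν) : ∫ y, ‖u (T y) * conj (v y)‖ ∂ν ≤ ‖u‖ * ‖v‖ := by
  rw [← Lp.norm_compMeasurePreserving u hT]
  refine le_of_eq_of_le (integral_congr_ae ?_) (Lp.integral_norm_mul_norm_le _ v)
  filter_upwards [Lp.coeFn_compMeasurePreserving u hT] with y hy
  rw [norm_mul, hy, RCLike.norm_conj, Function.comp_apply]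

theorem norm_integral_comp_mul_conj_le (hT : MeasurePreserving T ν ν') (u : Lp ℂ 2 ν')
    (v : Lp ℂ 2 ν) : ‖∫ y, u (T y) * conj (v y) ∂ν‖ ≤ ‖u‖ * ‖v‖ :=
  (norm_integral_le_integral_norm _).trans (hT.integral_norm_comp_mul_conj_le u v)

theorem hasSum_integral_comp_mul_conj (hT : MeasurePreserving T ν ν') {ι : Type*} [Countable ι]
    {u : ι → Lp ℂ 2 ν'} {v : ι → Lp ℂ 2 ν} (hsum : Summable fun i => ‖u i‖ * ‖v i‖)
    {F : α → ℂ} (hF : ∀ᵐ y ∂ν, HasSum (fun i => u i (T y) * conj (v i y)) (F y)) :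
    HasSum (fun i => ∫ y, u i (T y) * conj (v i y) ∂ν) (∫ y, F y ∂ν) := by
  have h := hasSum_integral_of_summable_integral_norm
    (fun i => hT.integrable_comp_mul_conj (u i) (v i))
    (hsum.of_nonneg_of_le (fun _ => integral_nonneg fun _ => norm_nonneg _)
      fun i => hT.integral_norm_comp_mul_conj_le (u i) (v i))
  rwa [integral_congr_ae (hF.mono fun y hy => hy.tsum_eq)] at h

end MeasureTheory.MeasurePreserving

theorem exists_Lp_ae_eq_inner_smul {α 𝕜 E H ι : Type*} [MeasurableSpace α] {ν : Measure α}
    [RCLike 𝕜] [NormedAddCommGroup E] [NormedSpace 𝕜 E]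
    [NormedAddCommGroup H] [InnerProductSpace 𝕜 H] {b : ι → H}
    (hb : ∀ x, HasSum (fun i => ⟪x, b i⟫_𝕜 * ⟪b i, x⟫_𝕜) ⟪x, x⟫_𝕜) (f : Lp E 2 ν)
    {A : α → H} (hAmeas : ∀ v : H, Measurable fun x => ⟪A x, v⟫_𝕜) {M : ℝ}
    (hA : ∀ x, ‖A x‖ ≤ M) :
    ∃ u : ι → Lp E 2 ν, (∀ i, u i =ᵐ[ν] fun x => ⟪A x, b i⟫_𝕜 • f x) ∧
      ∀ s : Finset ι, ∑ i ∈ s, ‖u i‖ ^ 2 ≤ (M * ‖f‖) ^ 2 := by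
  choose u hu using fun i => Lp.exists_ae_eq_smul_of_norm_le f (hAmeas (b i)).aestronglyMeasurable
    fun x => (norm_inner_le_norm (A x) (b i)).trans
      (mul_le_mul_of_nonneg_right (hA x) (norm_nonneg _))
  refine ⟨u, hu, fun s => (Lp.sum_norm_sq_le_of_ae_eq_smul f _ u hu s fun x => ?_).trans_eq
    (mul_pow M ‖f‖ 2).symm⟩
  exact (sum_norm_inner_sq_le_of_hasSum (hb (A x)) s).trans
    (pow_le_pow_left₀ (norm_nonneg _) (hA x) 2)

theorem md_multiplier_of_weakly_measurable_factorization_fourier_general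
    {G : Type*} [Group G] [TopologicalSpace G] [IsTopologicalGroup G]
    [MeasurableSpace G] [BorelSpace G] (μ : Measure G) [μ.IsHaarMeasure]
    {H : Type*} [NormedAddCommGroup H] [InnerProductSpace ℂ H] [CompleteSpace H]
    [TopologicalSpace.SeparableSpace H]
    (A B : G → H) (MA MB : ℝ)
    (hAmeas : ∀ v : H, Measurable fun x : G => ⟪A x, v⟫)
    (hBmeas : ∀ v : H, Measurable fun y : G => ⟪B y, v⟫)
    (hA : ∀ x : G, ‖A x‖ ≤ MA) (hB : ∀ y : G, ‖B y‖ ≤ MB)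
    (φ : G → ℂ) (hφ : ∀ x y : G, φ (y * x⁻¹) = ⟪A x, B y⟫)
    (f g : Lp ℂ 2 μ) :
    ∃ fs gs : ℕ → Lp ℂ 2 μ,
      (Summable fun n => ‖fs n‖ * ‖gs n‖) ∧
      (∑' n, ‖fs n‖ * ‖gs n‖) ≤ MA * MB * ‖f‖ * ‖g‖ ∧
      ∀ x : G,
        (Summable fun n => ‖∫ y, (fs n) (x⁻¹ * y) * conj ((gs n) y) ∂μ‖) ∧
        HasSum (fun n => ∫ y, (fs n) (x⁻¹ * y) * conj ((gs n) y) ∂μ)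
          (φ x * ∫ y, f (x⁻¹ * y) * conj (g y) ∂μ) := by
  obtain ⟨b, hb⟩ := exists_seq_hasSum_inner_mul_inner ℂ H
  obtain ⟨fs, hfs, hfs_sq⟩ := exists_Lp_ae_eq_inner_smul (fun v => hb v v) f hAmeas hA
  obtain ⟨gs, hgs, hgs_sq⟩ := exists_Lp_ae_eq_inner_smul (fun v => hb v v) g hBmeas hB
  have hMA : 0 ≤ MA := (norm_nonneg _).trans (hA 1)
  have hMB : 0 ≤ MB := (norm_nonneg _).trans (hB 1)
  obtain ⟨hsum, hle⟩ := summable_mul_of_sum_sq_le (fun n => norm_nonneg (fs n))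
    (fun n => norm_nonneg (gs n)) (by positivity) (by positivity) hfs_sq hgs_sq
  refine ⟨fs, gs, hsum, hle.trans_eq (by ring), fun x => ?_⟩
  have hT : MeasurePreserving (x⁻¹ * ·) μ μ := measurePreserving_mul_left μ x⁻¹
  refine ⟨hsum.of_nonneg_of_le (fun _ => norm_nonneg _)
    fun n => hT.norm_integral_comp_mul_conj_le _ _, ?_⟩
  rw [← integral_const_mul]
  refine hT.hasSum_integral_comp_mul_conj hsum ?_
  filter_upwards [ae_all_iff.2 fun n => hT.quasiMeasurePreserving.ae_eq_comp (hfs n),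
    ae_all_iff.2 hgs] with y hfy hgy
  have hφx : ⟪A (x⁻¹ * y), B y⟫ = φ x := by rw [← hφ]; group
  simp only [Function.comp_apply] at hfy
  simp only [hfy, hgy, smul_eq_mul, map_mul, inner_conj_symm, ← hφx]
  exact ((hb _ _).mul_right (f (x⁻¹ * y) * conj (g y))).congr_fun fun n =>
    mul_mul_mul_comm _ _ _ _

/-- If `φ (y * x⁻¹) = ⟪A x, B y⟫` for bounded weakly measurable maps
`A B : G → H` into a separable Hilbert space, then `φ` multiplies every coefficient of the
left regular representation into an absolutely convergent sum of such coefficients, with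
controlled norm. -/
theorem md_multiplier_of_weakly_measurable_factorization_fourier
    {G : Type*} [Group G] [TopologicalSpace G] [IsTopologicalGroup G]
    [LocallyCompactSpace G] [SecondCountableTopology G]
    [MeasurableSpace G] [BorelSpace G] (μ : Measure G) [μ.IsHaarMeasure]
    {H : Type*} [NormedAddCommGroup H] [InnerProductSpace ℂ H] [CompleteSpace H]
    [TopologicalSpace.SeparableSpace H]
    (A B : G → H) (MA MB : ℝ)
    (hAmeas : ∀ v : H, Measurable fun x : G => ⟪A x, v⟫)
    (hBmeas : ∀ v : H, Measurable fun y : G => ⟪B y, v⟫)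
    (hA : ∀ x : G, ‖A x‖ ≤ MA) (hB : ∀ y : G, ‖B y‖ ≤ MB)
    (φ : G → ℂ) (hφ : ∀ x y : G, φ (y * x⁻¹) = ⟪A x, B y⟫)
    (f g : Lp ℂ 2 μ) :
    ∃ fs gs : ℕ → Lp ℂ 2 μ,
      (Summable fun n => ‖fs n‖ * ‖gs n‖) ∧
      (∑' n, ‖fs n‖ * ‖gs n‖) ≤ MA * MB * ‖f‖ * ‖g‖ ∧
      ∀ x : G,
        (Summable fun n => ‖∫ y, (fs n) (x⁻¹ * y) * conj ((gs n) y) ∂μ‖) ∧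
        HasSum (fun n => ∫ y, (fs n) (x⁻¹ * y) * conj ((gs n) y) ∂μ)
          (φ x * ∫ y, f (x⁻¹ * y) * conj (g y) ∂μ) :=
  md_multiplier_of_weakly_measurable_factorization_fourier_general μ A B MA MB hAmeas hBmeas hA hB φ
    hφ f g
end

section
/- Let G be a locally compact second countable group, let H be a separable complex Hilbert space, and let A, B : G → H be bounded weakly measurable maps (i.e. x ↦ ⟨A(x), v⟩ is Borel measurable for every v ∈ H, and sup_{x∈G} ‖A(x)‖ < ∞, sup_{y∈G} ‖B(y)‖ < ∞). If φ : G → ℂ satisfies φ(y x⁻¹) = ⟨A(x), B(y)⟩ for all x, y ∈ G, then φ is continuous. -/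
open ComplexConjugate Filter Topology
open scoped ComplexInnerProductSpace Pointwise

universe u

open MeasureTheory

/-
Averaging `φ g = ⟪A x, B (g * x)⟫` over `x` in a compact neighbourhood `K` of `1` writes `φ`,
near any `g₀` and up to the factor `μ K`, as `g ↦ ∫ ⟪1_K A x, f (g * x)⟫ dμ x`, where `f` is `B`
cut off to a compact set; by Pettis, weak measurability and separability make `A` and `f`
strongly measurable, so `f ∈ L¹(G, H)`. That integral is continuous in `g` since left
translation is continuous on `L¹(G, H)` and pairing with the bounded `1_K A` is Lipschitz on `L¹`.
-/

theorem measurable_of_measurable_inner {α : Type*} [MeasurableSpace α]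
    {H : Type*} [NormedAddCommGroup H] [InnerProductSpace ℂ H] [CompleteSpace H]
    [TopologicalSpace.SeparableSpace H] [MeasurableSpace H] [BorelSpace H]
    {f : α → H} (hf : ∀ v : H, Measurable fun x => ⟪f x, v⟫) : Measurable f := by
  obtain ⟨u, hu⟩ := TopologicalSpace.exists_dense_seq H
  let J : H → ℕ → ℂ := fun w n => ⟪w, u n⟫
  have hJ : MeasurableEmbedding J :=
    (continuous_pi fun n => continuous_id.inner continuous_const).measurableEmbedding
      fun _ _ h => hu.eq_of_inner_left ℂ (congrFun h)
  exact hJ.measurable_comp_iff.mp (measurable_pi_iff.mpr fun n => hf (u n))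

namespace MeasureTheory

section BoundedPairing

variable {α : Type*} [MeasurableSpace α] {μ : Measure α}
  {H : Type*} [NormedAddCommGroup H] [InnerProductSpace ℂ H]
  {a : α → H} {M : ℝ}

theorem Integrable.inner_of_norm_le {f : α → H} (hf : Integrable f μ)
    (ha : AEStronglyMeasurable a μ) (ha_le : ∀ x, ‖a x‖ ≤ M) :
    Integrable (fun x => ⟪a x, f x⟫) μ :=
  (hf.norm.const_mul M).mono' (ha.inner hf.1) <| .of_forall fun x =>
    (norm_inner_le_norm _ _).trans (mul_le_mul_of_nonneg_right (ha_le x) (norm_nonneg _))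

theorem norm_integral_inner_le (ha_le : ∀ x, ‖a x‖ ≤ M) (h : Lp H 1 μ) :
    ‖∫ x, ⟪a x, h x⟫ ∂μ‖ ≤ M * ‖h‖ := by
  rw [L1.norm_eq_integral_norm, ← integral_const_mul]
  exact norm_integral_le_of_norm_le ((L1.integrable_coeFn h).norm.const_mul M) <| .of_forall
    fun x => (norm_inner_le_norm _ _).trans (mul_le_mul_of_nonneg_right (ha_le x) (norm_nonneg _))

theorem lipschitzWith_integral_inner (ha : AEStronglyMeasurable a μ) (ha_le : ∀ x, ‖a x‖ ≤ M) :
    LipschitzWith M.toNNReal fun h : Lp H 1 μ => ∫ x, ⟪a x, h x⟫ ∂μ := by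
  refine .of_dist_le' fun h h' => ?_
  have hsub : ∫ x, ⟪a x, h x⟫ ∂μ - ∫ x, ⟪a x, h' x⟫ ∂μ = ∫ x, ⟪a x, (h - h') x⟫ ∂μ := by
    rw [← integral_sub ((L1.integrable_coeFn h).inner_of_norm_le ha ha_le)
      ((L1.integrable_coeFn h').inner_of_norm_le ha ha_le)]
    refine integral_congr_ae ?_
    filter_upwards [Lp.coeFn_sub h h'] with x hx
    rw [hx, Pi.sub_apply, inner_sub_right]
  rw [dist_eq_norm, dist_eq_norm, hsub]
  exact norm_integral_inner_le ha_le _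

end BoundedPairing

section Translation

variable {G : Type*} [Group G] [TopologicalSpace G] [IsTopologicalGroup G]
  [MeasurableSpace G] [BorelSpace G] {μ : Measure G} [IsLocallyFiniteMeasure μ]
  [μ.InnerRegularCompactLTTop] [μ.IsMulLeftInvariant]
  {H : Type*} [NormedAddCommGroup H] [InnerProductSpace ℂ H]

theorem continuous_integral_inner_comp_mul_left {a : G → H} {M : ℝ}
    (ha : AEStronglyMeasurable a μ) (ha_le : ∀ x, ‖a x‖ ≤ M) {f : G → H} (hf : Integrable f μ) :
    Continuous fun g => ∫ x, ⟪a x, f (g * x)⟫ ∂μ := by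
  have : Fact ((1 : ENNReal) ≠ ⊤) := ⟨ENNReal.one_ne_top⟩
  have htranslate : Continuous fun g : G => DomMulAct.mk g • hf.toL1 f :=
    DomMulAct.mkHomeomorph.continuous.smul continuous_const
  convert (lipschitzWith_integral_inner ha ha_le).continuous.comp htranslate using 1 with g
  refine funext fun g => integral_congr_ae ?_
  have hcomp := (measurePreserving_mul_left μ g).quasiMeasurePreserving.ae_eq_comp hf.coeFn_toL1
  filter_upwards [DomMulAct.smul_Lp_ae_eq (DomMulAct.mk g) (hf.toL1 f), hcomp] with x h1 h2
  exact congrArg (inner ℂ (a x)) (h1.trans h2).symm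

end Translation

end MeasureTheory

theorem integral_inner_indicator_mul_left_eq {G : Type*} [Group G] [MeasurableSpace G]
    {μ : Measure G} {H : Type*} [NormedAddCommGroup H] [InnerProductSpace ℂ H]
    {A B : G → H} {φ : G → ℂ} (hφ : ∀ x y : G, φ (y * x⁻¹) = ⟪A x, B y⟫)
    {K L : Set G} (hK : MeasurableSet K) {g : G} (hKL : ∀ x ∈ K, g * x ∈ L) :
    ∫ x, ⟪K.indicator A x, L.indicator B (g * x)⟫ ∂μ = μ.real K • φ g := by
  have hpointwise : (fun x => ⟪K.indicator A x, L.indicator B (g * x)⟫) =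
      K.indicator fun _ => φ g := by
    ext x
    by_cases hx : x ∈ K
    · simp [hx, hKL x hx, ← hφ]
    · simp [hx]
  rw [hpointwise, integral_indicator_const _ hK]

theorem continuous_of_weakly_measurable_factorization_general
    {G : Type*} [Group G] [TopologicalSpace G] [IsTopologicalGroup G]
    [LocallyCompactSpace G]
    [MeasurableSpace G] [BorelSpace G]
    {H : Type*} [NormedAddCommGroup H] [InnerProductSpace ℂ H] [CompleteSpace H]
    [TopologicalSpace.SeparableSpace H]
    (A B : G → H) (MA MB : ℝ)
    (hAmeas : ∀ v : H, Measurable fun x : G => ⟪A x, v⟫)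
    (hBmeas : ∀ v : H, Measurable fun y : G => ⟪B y, v⟫)
    (hA : ∀ x : G, ‖A x‖ ≤ MA) (hB : ∀ y : G, ‖B y‖ ≤ MB)
    (φ : G → ℂ) (hφ : ∀ x y : G, φ (y * x⁻¹) = ⟪A x, B y⟫) :
    Continuous φ := by
  borelize H
  let μ : Measure G := .haar
  refine continuous_iff_continuousAt.2 fun g₀ => ?_
  obtain ⟨K, hK1, hKc, hKcl⟩ := exists_mem_nhds_isCompact_isClosed (1 : G)
  obtain ⟨V, hVc, hVg₀⟩ := exists_compact_mem_nhds g₀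
  set L := closure (V * K)
  have hLc : IsCompact L := (hVc.mul hKc).closure
  have hAK : AEStronglyMeasurable (K.indicator A) μ :=
    ((measurable_of_measurable_inner hAmeas).indicator hKcl.measurableSet).aestronglyMeasurable
  have hBL : IntegrableOn B L μ := .of_bound hLc.measure_lt_top
    (measurable_of_measurable_inner hBmeas).aestronglyMeasurable.restrict MB (.of_forall hB)
  have hΦ := continuous_integral_inner_comp_mul_left hAK
    (fun x => (norm_indicator_le_norm_self A x).trans (hA x))
    (hBL.integrable_indicator isClosed_closure.measurableSet)
  have hμK : μ.real K ≠ 0 :=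
    ENNReal.toReal_ne_zero.2 ⟨(μ.measure_pos_of_mem_nhds hK1).ne', hKc.measure_lt_top.ne⟩
  refine ((hΦ.const_smul (μ.real K)⁻¹).continuousAt (x := g₀)).congr ?_
  filter_upwards [hVg₀] with g hg
  rw [Pi.smul_apply, integral_inner_indicator_mul_left_eq hφ hKcl.measurableSet
    fun x hx => subset_closure (Set.mul_mem_mul hg hx), inv_smul_smul₀ hμK]

/-- If `φ (y * x⁻¹) = ⟪A x, B y⟫` for bounded weakly measurable maps
`A B : G → H` into a separable Hilbert space, then `φ` is continuous. -/
theorem continuous_of_weakly_measurable_factorization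
    {G : Type*} [Group G] [TopologicalSpace G] [IsTopologicalGroup G]
    [LocallyCompactSpace G] [SecondCountableTopology G]
    [MeasurableSpace G] [BorelSpace G]
    {H : Type*} [NormedAddCommGroup H] [InnerProductSpace ℂ H] [CompleteSpace H]
    [TopologicalSpace.SeparableSpace H]
    (A B : G → H) (MA MB : ℝ)
    (hAmeas : ∀ v : H, Measurable fun x : G => ⟪A x, v⟫)
    (hBmeas : ∀ v : H, Measurable fun y : G => ⟪B y, v⟫)
    (hA : ∀ x : G, ‖A x‖ ≤ MA) (hB : ∀ y : G, ‖B y‖ ≤ MB)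
    (φ : G → ℂ) (hφ : ∀ x y : G, φ (y * x⁻¹) = ⟪A x, B y⟫) :
    Continuous φ :=
  continuous_of_weakly_measurable_factorization_general A B MA MB hAmeas hBmeas hA hB φ hφ
end

section
/- Let G be a locally compact group, d ≥ 2 an integer, and let φ : G → ℂ be a nonzero M_d-multiplier admitting a factorization (H₀, …, H_d; ξ₁, …, ξ_d) of length d. Then there exists another factorization (H₀', …, H_d'; ξ₁', …, ξ_d') of φ with sup_{x∈G} ‖ξᵢ'(x)‖ ≤ sup_{x∈G} ‖ξᵢ(x)‖ for each i, such that for every i = 1, …, d−1 the sets Aᵢ' = {ξ'_{i+1}(x_{i+1})⋯ξ'_d(x_d)(1) : x_{i+1}, …, x_d ∈ G} and Bᵢ' = {(ξ'₁(x₁)⋯ξ'ᵢ(xᵢ))*(1) : x₁, …, xᵢ ∈ G} are total in Hᵢ' (their closed linear spans equal Hᵢ'). -/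
open ComplexConjugate Filter Topology
open scoped ComplexInnerProductSpace

universe u

open MeasureTheory

/-!
Compress the factorization twice. First replace every `H i` by the closed span `S i` of the
right vectors at `i`, and every `ξ i (x)` by `P_{S (i-1)} ∘ ξ i (x) ∘ ι_{S i}`; then do the same in
the new factorization with the closed spans of the left vectors. Compressions do not increase
norms, and a compression sends the right vectors (and, when they lie in the subspaces, the left
vectors) to their orthogonal projections: in the first step the right vectors already lie in `S`,
in the second the adjoints `ξ i (x)^*` map the spans of left vectors into each other, so the
projections commute with the chain. Projections of a total set are total in the subspace, so the
totality gained in the first step survives the second. The end spaces stay `ℂ` because `φ ≠ 0`.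
-/

open Set Submodule ContinuousLinearMap

theorem Submodule.eq_top_of_mem_of_ne_zero {K M : Type*} [Field K] [AddCommGroup M]
    [Module K M] (e : M ≃ₗ[K] K) {S : Submodule K M} {v : M} (hv : v ∈ S) (hv0 : v ≠ 0) :
    S = ⊤ := by
  have hev : e v ≠ 0 := by simpa using hv0
  refine eq_top_iff.2 fun w _ => ?_
  have : w = (e w / e v) • v := e.injective (by simp [hev])
  exact this ▸ S.smul_mem _ hv

section Hilbert

variable {𝕜 E F : Type*} [RCLike 𝕜] [NormedAddCommGroup E] [InnerProductSpace 𝕜 E]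
  [NormedAddCommGroup F] [InnerProductSpace 𝕜 F]

theorem Submodule.mapsTo_topologicalClosure_span (f : E →L[𝕜] F) {s : Set E} {t : Set F}
    (h : MapsTo f s t) :
    MapsTo f (span 𝕜 s).topologicalClosure (span 𝕜 t).topologicalClosure := by
  intro v hv
  rw [SetLike.mem_coe, ← SetLike.mem_coe, topologicalClosure_coe] at hv ⊢
  refine map_mem_closure f.continuous hv fun u hu => span_mono (image_subset_iff.2 h) ?_
  exact apply_mem_span_image_of_mem_span (f : E →ₗ[𝕜] F) hu

variable {K : Submodule 𝕜 E} [K.HasOrthogonalProjection]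

theorem Submodule.coe_orthogonalProjectionOnto_of_mem {v : E} (hv : v ∈ K) :
    (K.orthogonalProjectionOnto v : E) = v :=
  starProjection_eq_self_iff.2 hv

theorem Submodule.ofTop_symm_eq_orthogonalProjectionOnto (hK : K = ⊤) (v : E) :
    (LinearIsometryEquiv.ofTop E K hK).symm v = K.orthogonalProjectionOnto v :=
  Subtype.ext (by simp [coe_orthogonalProjectionOnto_of_mem (hK ▸ mem_top : v ∈ K)])

theorem Submodule.topologicalClosure_span_orthogonalProjectionOnto_image_eq_top {s : Set E}
    (hK : K ≤ (span 𝕜 s).topologicalClosure) :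
    (span 𝕜 (K.orthogonalProjectionOnto '' s)).topologicalClosure = ⊤ := by
  refine eq_top_iff.2 fun w _ => ?_
  have hP := mapsTo_topologicalClosure_span K.orthogonalProjectionOnto (mapsTo_image _ s)
  simpa only [orthogonalProjectionOnto_mem_subspace_eq_self, SetLike.mem_coe] using hP (hK w.2)

end Hilbert

theorem List.exists_ofFn_prod_eq {M : Type*} [Monoid M] {d : ℕ} (hd : 0 < d) (g : M) :
    ∃ x : Fin d → M, (List.ofFn x).prod = g := by
  obtain ⟨n, rfl⟩ := Nat.exists_eq_succ_of_ne_zero hd.ne'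
  exact ⟨Fin.cons g 1, by simp [List.ofFn_succ]⟩

namespace Factorization

variable {d : ℕ} {G : Type*} [Group G] {φ : G → ℂ}

section Vectors

variable (F : Factorization.{u} d G φ) (x : Fin d → G)

theorem rightVec_last : F.rightVec x (Fin.last d) = F.ed.symm 1 :=
  Fin.reverseInduction_last ..

theorem rightVec_castSucc (j : Fin d) :
    F.rightVec x j.castSucc = F.xi j (x j) (F.rightVec x j.succ) :=
  Fin.reverseInduction_castSucc ..

theorem leftVec_zero : F.leftVec x 0 = F.e0.symm 1 := rfl

theorem leftVec_succ (j : Fin d) :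
    F.leftVec x j.succ = adjoint (F.xi j (x j)) (F.leftVec x j.castSucc) := rfl

theorem factor_eq_rightVec_zero : φ (List.ofFn x).prod = F.e0 (F.rightVec x 0) := F.factor x

theorem leftVec_congr {y : Fin d → G} (i : Fin (d + 1))
    (h : ∀ j : Fin d, j.castSucc < i → x j = y j) : F.leftVec x i = F.leftVec y i := by
  induction i using Fin.induction with
  | zero => rfl
  | succ j ih =>
    rw [leftVec_succ, leftVec_succ, h j j.castSucc_lt_succ,
      ih fun k hk => h k (hk.trans j.castSucc_lt_succ)]

theorem leftVec_update_succ (j : Fin d) (g : G) :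
    F.leftVec (Function.update x j g) j.succ = adjoint (F.xi j g) (F.leftVec x j.castSucc) := by
  rw [leftVec_succ, Function.update_self,
    F.leftVec_congr _ _ fun k hk =>
      Function.update_of_ne (Fin.castSucc_lt_castSucc_iff.1 hk).ne g x]

theorem inner_leftVec_rightVec (i : Fin (d + 1)) :
    ⟪F.leftVec x i, F.rightVec x i⟫ = φ (List.ofFn x).prod := by
  induction i using Fin.induction with
  | zero =>
    rw [leftVec_zero, F.factor_eq_rightVec_zero, ← F.e0.inner_map_map, F.e0.apply_symm_apply]
    simp [RCLike.inner_apply]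
  | succ j ih => rw [leftVec_succ, adjoint_inner_left, ← rightVec_castSucc, ih]

end Vectors

section Compress

variable (F : Factorization.{u} d G φ) (S : ∀ i, Submodule ℂ (F.H i)) [∀ i, CompleteSpace (S i)]

noncomputable def compressXi (j : Fin d) (g : G) : S j.succ →L[ℂ] S j.castSucc :=
  (S j.castSucc).orthogonalProjectionOnto ∘L F.xi j g ∘L (S j.succ).subtypeL

theorem compressXi_apply (j : Fin d) (g : G) (v : S j.succ) :
    F.compressXi S j g v = (S j.castSucc).orthogonalProjectionOnto (F.xi j g v) := rfl

theorem norm_compressXi_le (j : Fin d) (g : G) : ‖F.compressXi S j g‖ ≤ ‖F.xi j g‖ := by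
  refine opNorm_le_bound _ (norm_nonneg _) fun v => ?_
  calc ‖F.compressXi S j g v‖ ≤ ‖F.xi j g (v : F.H j.succ)‖ := by
        rw [compressXi_apply]; exact norm_orthogonalProjectionOnto_apply_le _ _
    _ ≤ ‖F.xi j g‖ * ‖v‖ := (F.xi j g).le_opNorm _

theorem adjoint_compressXi (j : Fin d) (g : G) :
    adjoint (F.compressXi S j g) =
      (S j.succ).orthogonalProjectionOnto ∘L adjoint (F.xi j g) ∘L (S j.castSucc).subtypeL := by
  rw [compressXi, adjoint_comp, adjoint_comp, Submodule.adjoint_subtypeL,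
    Submodule.adjoint_orthogonalProjectionOnto, comp_assoc]

def CompressesRightVec : Prop :=
  ∀ (x : Fin d → G) (j : Fin d),
    F.compressXi S j (x j) ((S j.succ).orthogonalProjectionOnto (F.rightVec x j.succ)) =
      (S j.castSucc).orthogonalProjectionOnto (F.rightVec x j.castSucc)

variable {F S}

theorem reverseInduction_compressXi (hS : F.CompressesRightVec S) (x : Fin d → G)
    (i : Fin (d + 1)) :
    Fin.reverseInduction (motive := fun i => S i)
        ((S (Fin.last d)).orthogonalProjectionOnto (F.ed.symm 1))
        (fun j v => F.compressXi S j (x j) v) i =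
      (S i).orthogonalProjectionOnto (F.rightVec x i) := by
  induction i using Fin.reverseInduction with
  | last => rw [Fin.reverseInduction_last, rightVec_last]
  | cast j ih => rw [Fin.reverseInduction_castSucc, ih, hS]

noncomputable def compress (h0 : S 0 = ⊤) (hd : S (Fin.last d) = ⊤)
    (hS : F.CompressesRightVec S) : Factorization.{u} d G φ where
  H i := S i
  e0 := (LinearIsometryEquiv.ofTop _ _ h0).trans F.e0
  ed := (LinearIsometryEquiv.ofTop _ _ hd).trans F.ed
  xi := F.compressXi S
  bdd j := (F.bdd j).imp fun _ hM g => (F.norm_compressXi_le S j g).trans (hM g)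
  factor x := by
    rw [LinearIsometryEquiv.coe_symm_trans, Function.comp_apply,
      ofTop_symm_eq_orthogonalProjectionOnto, reverseInduction_compressXi hS,
      LinearIsometryEquiv.trans_apply, LinearIsometryEquiv.ofTop_apply, coe_orthogonalProjectionOnto_of_mem (h0 ▸ mem_top)]
    exact F.factor x

variable (h0 : S 0 = ⊤) (hd : S (Fin.last d) = ⊤) (hS : F.CompressesRightVec S)

theorem norm_compress_xi_le (j : Fin d) (g : G) : ‖(F.compress h0 hd hS).xi j g‖ ≤ ‖F.xi j g‖ :=
  F.norm_compressXi_le S j g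

theorem compress_rightVec (x : Fin d → G) (i : Fin (d + 1)) :
    (F.compress h0 hd hS).rightVec x i = (S i).orthogonalProjectionOnto (F.rightVec x i) := by
  show Fin.reverseInduction (motive := fun i => S i)
    (((LinearIsometryEquiv.ofTop _ _ hd).trans F.ed).symm 1)
    (fun j v => F.compressXi S j (x j) v) i = _
  rw [LinearIsometryEquiv.coe_symm_trans, Function.comp_apply,
    ofTop_symm_eq_orthogonalProjectionOnto, reverseInduction_compressXi hS]

theorem compress_leftVec (hl : ∀ x i, F.leftVec x i ∈ S i) (x : Fin d → G) (i : Fin (d + 1)) :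
    (F.compress h0 hd hS).leftVec x i = (S i).orthogonalProjectionOnto (F.leftVec x i) := by
  induction i using Fin.induction with
  | zero =>
    show ((LinearIsometryEquiv.ofTop _ _ h0).trans F.e0).symm 1 = _
    rw [LinearIsometryEquiv.coe_symm_trans, Function.comp_apply,
      ofTop_symm_eq_orthogonalProjectionOnto, leftVec_zero]
  | succ j ih =>
    rw [leftVec_succ, leftVec_succ, ih]
    show adjoint (F.compressXi S j (x j)) _ = _
    rw [adjoint_compressXi, comp_apply, comp_apply, subtypeL_apply,
      coe_orthogonalProjectionOnto_of_mem (hl x _)]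

theorem compressesRightVec_of_rightVec_mem (hr : ∀ x i, F.rightVec x i ∈ S i) :
    F.CompressesRightVec S := by
  intro x j
  rw [compressXi_apply, coe_orthogonalProjectionOnto_of_mem (hr x _), ← rightVec_castSucc]

theorem compressesRightVec_of_mapsTo_adjoint
    (hadj : ∀ j g, MapsTo (adjoint (F.xi j g)) (S j.castSucc) (S j.succ)) :
    F.CompressesRightVec S := by
  intro x j
  rw [compressXi_apply, rightVec_castSucc, eq_comm, ← sub_eq_zero, ← map_sub, ← map_sub]
  refine orthogonalProjectionOnto_apply_of_mem_orthogonal ((mem_orthogonal _ _).2 fun u hu => ?_)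
  rw [← adjoint_inner_left]
  exact inner_right_of_mem_orthogonal (hadj j (x j) hu) (sub_starProjection_mem_orthogonal _)

end Compress

section Spans

variable (F : Factorization.{u} d G φ)

noncomputable def rightSpan (i : Fin (d + 1)) : Submodule ℂ (F.H i) :=
  (span ℂ (range fun x : Fin d → G => F.rightVec x i)).topologicalClosure

noncomputable def leftSpan (i : Fin (d + 1)) : Submodule ℂ (F.H i) :=
  (span ℂ (range fun x : Fin d → G => F.leftVec x i)).topologicalClosure

instance (i : Fin (d + 1)) : CompleteSpace (F.rightSpan i) :=
  topologicalClosure.completeSpace _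

instance (i : Fin (d + 1)) : CompleteSpace (F.leftSpan i) :=
  topologicalClosure.completeSpace _

theorem rightVec_mem_rightSpan (x : Fin d → G) (i : Fin (d + 1)) :
    F.rightVec x i ∈ F.rightSpan i :=
  le_topologicalClosure _ (subset_span (mem_range_self x))

theorem leftVec_mem_leftSpan (x : Fin d → G) (i : Fin (d + 1)) :
    F.leftVec x i ∈ F.leftSpan i :=
  le_topologicalClosure _ (subset_span (mem_range_self x))

theorem mapsTo_adjoint_leftSpan (j : Fin d) (g : G) :
    MapsTo (adjoint (F.xi j g)) (F.leftSpan j.castSucc) (F.leftSpan j.succ) := by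
  refine mapsTo_topologicalClosure_span _ ?_
  rintro _ ⟨x, rfl⟩
  exact ⟨Function.update x j g, F.leftVec_update_succ x j g⟩

variable {F} {S : ∀ i, Submodule ℂ (F.H i)} [∀ i, CompleteSpace (S i)]
  (h0 : S 0 = ⊤) (hd : S (Fin.last d) = ⊤) (hS : F.CompressesRightVec S)

theorem compress_rightSpan_eq_top {i : Fin (d + 1)} (hi : S i ≤ F.rightSpan i) :
    (F.compress h0 hd hS).rightSpan i = ⊤ := by
  have hrange : (range fun x => (F.compress h0 hd hS).rightVec x i) =
      (S i).orthogonalProjectionOnto '' range fun x => F.rightVec x i := by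
    rw [← range_comp]
    exact congrArg range (funext (compress_rightVec h0 hd hS · i))
  rw [rightSpan, hrange]
  exact topologicalClosure_span_orthogonalProjectionOnto_image_eq_top hi

theorem compress_leftSpan_eq_top (hl : ∀ x i, F.leftVec x i ∈ S i) {i : Fin (d + 1)}
    (hi : S i ≤ F.leftSpan i) : (F.compress h0 hd hS).leftSpan i = ⊤ := by
  have hrange : (range fun x => (F.compress h0 hd hS).leftVec x i) =
      (S i).orthogonalProjectionOnto '' range fun x => F.leftVec x i := by
    rw [← range_comp]
    exact congrArg range (funext (compress_leftVec h0 hd hS hl · i))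
  rw [leftSpan, hrange]
  exact topologicalClosure_span_orthogonalProjectionOnto_image_eq_top hi

end Spans

theorem iSup_norm_xi_le {F F' : Factorization.{u} d G φ}
    (h : ∀ j g, ‖F'.xi j g‖ ≤ ‖F.xi j g‖) (j : Fin d) :
    ⨆ g, ‖F'.xi j g‖ ≤ ⨆ g, ‖F.xi j g‖ := by
  obtain ⟨M, hM⟩ := F.bdd j
  exact ciSup_mono ⟨M, forall_mem_range.2 hM⟩ (h j)

variable (F : Factorization.{u} d G φ) {x₀ : Fin d → G}

theorem exists_rightSpan_eq_top (hx₀ : φ (List.ofFn x₀).prod ≠ 0) :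
    ∃ F' : Factorization.{u} d G φ,
      (∀ j g, ‖F'.xi j g‖ ≤ ‖F.xi j g‖) ∧ ∀ i, F'.rightSpan i = ⊤ := by
  have h0 : F.rightSpan 0 = ⊤ :=
    eq_top_of_mem_of_ne_zero F.e0.toLinearEquiv (F.rightVec_mem_rightSpan x₀ 0) fun h =>
      hx₀ (by rw [F.factor_eq_rightVec_zero x₀, h, map_zero])
  have hd : F.rightSpan (Fin.last d) = ⊤ :=
    eq_top_of_mem_of_ne_zero F.ed.toLinearEquiv (F.rightVec_mem_rightSpan x₀ _)
      (by simp [rightVec_last])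
  have hS := compressesRightVec_of_rightVec_mem F.rightVec_mem_rightSpan
  exact ⟨F.compress h0 hd hS, norm_compress_xi_le h0 hd hS,
    fun i => compress_rightSpan_eq_top h0 hd hS le_rfl⟩

theorem exists_rightSpan_leftSpan_eq_top (hx₀ : φ (List.ofFn x₀).prod ≠ 0)
    (hr : ∀ i, F.rightSpan i = ⊤) :
    ∃ F' : Factorization.{u} d G φ,
      (∀ j g, ‖F'.xi j g‖ ≤ ‖F.xi j g‖) ∧ ∀ i, F'.rightSpan i = ⊤ ∧ F'.leftSpan i = ⊤ := by
  have h0 : F.leftSpan 0 = ⊤ :=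
    eq_top_of_mem_of_ne_zero F.e0.toLinearEquiv (F.leftVec_mem_leftSpan x₀ 0)
      (by simp [leftVec_zero])
  have hd : F.leftSpan (Fin.last d) = ⊤ :=
    eq_top_of_mem_of_ne_zero F.ed.toLinearEquiv (F.leftVec_mem_leftSpan x₀ _) fun h =>
      hx₀ (by rw [← F.inner_leftVec_rightVec x₀ (Fin.last d), h, inner_zero_left])
  have hS := compressesRightVec_of_mapsTo_adjoint F.mapsTo_adjoint_leftSpan
  exact ⟨F.compress h0 hd hS, norm_compress_xi_le h0 hd hS, fun i =>
    ⟨compress_rightSpan_eq_top h0 hd hS (le_top.trans_eq (hr i).symm),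
      compress_leftSpan_eq_top h0 hd hS F.leftVec_mem_leftSpan le_rfl⟩⟩

end Factorization

theorem exists_factorization_total_general
    {G : Type*} [Group G]
    (d : ℕ) (hd : 2 ≤ d)
    (φ : G → ℂ) (hφne : φ ≠ 0)
    (F : Factorization.{u} d G φ) :
    ∃ F' : Factorization.{u} d G φ,
      (∀ i : Fin d, (⨆ x : G, ‖F'.xi i x‖) ≤ ⨆ x : G, ‖F.xi i x‖) ∧
      ∀ i : Fin (d + 1), i ≠ 0 → i ≠ Fin.last d →
        (Submodule.span ℂ
            (Set.range fun x : Fin d → G => F'.rightVec x i)).topologicalClosure = ⊤ ∧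
        (Submodule.span ℂ
            (Set.range fun x : Fin d → G => F'.leftVec x i)).topologicalClosure = ⊤ := by
  obtain ⟨g, hg⟩ := Function.ne_iff.1 hφne
  obtain ⟨x₀, rfl⟩ := List.exists_ofFn_prod_eq (by omega : 0 < d) g
  obtain ⟨F₁, hF₁, hr₁⟩ := F.exists_rightSpan_eq_top hg
  obtain ⟨F₂, hF₂, htotal⟩ := F₁.exists_rightSpan_leftSpan_eq_top hg hr₁
  exact ⟨F₂, Factorization.iSup_norm_xi_le fun j g => (hF₂ j g).trans (hF₁ j g),
    fun i _ _ => htotal i⟩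

/-- A nonzero `M_d`-multiplier with a given factorization admits a
factorization with no larger constants in which the sets `Aᵢ'` and `Bᵢ'` are total in
`Hᵢ'` for `i = 1, …, d-1`. -/
theorem exists_factorization_total
    {G : Type*} [Group G] [TopologicalSpace G] [IsTopologicalGroup G] [LocallyCompactSpace G]
    (d : ℕ) (hd : 2 ≤ d)
    (φ : G → ℂ) (hφ : IsMdMultiplier d φ) (hφne : φ ≠ 0)
    (F : Factorization.{u} d G φ) :
    ∃ F' : Factorization.{u} d G φ,
      (∀ i : Fin d, (⨆ x : G, ‖F'.xi i x‖) ≤ ⨆ x : G, ‖F.xi i x‖) ∧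
      ∀ i : Fin (d + 1), i ≠ 0 → i ≠ Fin.last d →
        (Submodule.span ℂ
            (Set.range fun x : Fin d → G => F'.rightVec x i)).topologicalClosure = ⊤ ∧
        (Submodule.span ℂ
            (Set.range fun x : Fin d → G => F'.leftVec x i)).topologicalClosure = ⊤ :=
  exists_factorization_total_general d hd φ hφne F
end

section
/- Let G be a locally compact second countable group with left Haar measure μ, and let (φᵢ)_{i∈I} be a net of bounded measurable functions on G with sup_{i∈I} ‖φᵢ‖_∞ ≤ M < ∞ such that ∫_G φᵢ h dμ → ∫_G h dμ for every h ∈ L¹(G, μ) (i.e. φᵢ → 1 in the weak-* topology σ(L^∞, L¹)). Let f ∈ C_c(G) with f ≥ 0 and ∫_G f dμ = 1. Then the net of functions f * φᵢ, where (f * φᵢ)(x) = ∫_G f(y) φᵢ(y⁻¹x) dμ(y), converges to the constant function 1 uniformly on every compact subset of G. -/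
open ComplexConjugate Filter Topology
open scoped ComplexInnerProductSpace

universe u

open MeasureTheory

/-!
Write `F_i = f ∗ φ_i`. For fixed `x`, `F_i x` is the integral of `φ_i` against the push-forward
of `f dμ` under `y ↦ y⁻¹ x`, a finite measure absolutely continuous with respect to `μ`; pairing
`φ_i` with its Radon–Nikodym density shows `F_i x → ∫ f dμ = 1`. By left invariance,
`F_i (g x) - F_i x = ∫ (f (g u) - f u) φ_i (u⁻¹ x) dμ u`, which is at most `M ‖f (g ·) - f‖₁`,
and this tends to `0` as `g → 1` by uniform continuity of `f`. So the `F_i` are equicontinuous,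
and on compact sets pointwise convergence of an equicontinuous family is uniform.
-/

open scoped Pointwise ENNReal NNReal

theorem Equicontinuous.tendstoUniformlyOn_of_tendsto {ι X α : Type*} [TopologicalSpace X]
    [UniformSpace α] {F : ι → X → α} (hF : Equicontinuous F) {l : Filter ι} {f : X → α}
    (h : Tendsto F l (𝓝 f)) {K : Set X} (hK : IsCompact K) :
    TendstoUniformlyOn F f l K := by
  have hcover : ⋃₀ {K : Set X | IsCompact K} = Set.univ :=
    Set.eq_univ_of_forall fun x => ⟨{x}, isCompact_singleton, rfl⟩
  have := (EquicontinuousOn.tendsto_uniformOnFun_iff_pi (fun _ hK => hK) hcover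
    (fun K _ => hF.equicontinuousOn K) l f).2 h
  exact UniformOnFun.tendsto_iff_tendstoUniformlyOn.1 this K hK

theorem tendsto_integral_of_absolutelyContinuous {X ι : Type*} [MeasurableSpace X]
    {μ : Measure X} [SigmaFinite μ] {l : Filter ι} {φ : ι → X → ℂ}
    (hconv : ∀ h : X → ℂ, Integrable h μ →
      Tendsto (fun i => ∫ x, φ i x * h x ∂μ) l (𝓝 (∫ x, h x ∂μ)))
    {ν : Measure X} [IsFiniteMeasure ν] (hν : ν ≪ μ) :
    Tendsto (fun i => ∫ x, φ i x ∂ν) l (𝓝 (ν.real Set.univ : ℂ)) := by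
  have hmass : ∫ x, ((ν.rnDeriv μ x).toReal : ℂ) ∂μ = ν.real Set.univ := by
    rw [integral_complex_ofReal, Measure.integral_toReal_rnDeriv hν]
  have hdensity (ψ : X → ℂ) :
      ∫ x, ψ x * ((ν.rnDeriv μ x).toReal : ℂ) ∂μ = ∫ x, ψ x ∂ν := by
    simp_rw [mul_comm (ψ _), ← Complex.real_smul]
    exact integral_rnDeriv_smul hν
  convert (hconv _ (Measure.integrable_toReal_rnDeriv (μ := ν)).ofReal).congr
    fun i => hdensity (φ i) using 2
  exact hmass.symm

section MeasurableGroup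

variable {G : Type*} [Group G] [MeasurableSpace G] [MeasurableInv G] (μ : Measure G)

theorem conv_ofReal_eq_integral_map_withDensity [MeasurableMul G] {f : G → ℝ}
    (hf : Measurable f) (hfpos : ∀ x, 0 ≤ f x) {ψ : G → ℂ} (hψ : Measurable ψ) (x : G) :
    conv μ (fun y => (f y : ℂ)) ψ x =
      ∫ z, ψ z ∂(μ.withDensity fun y => ENNReal.ofReal (f y)).map (·⁻¹ * x) := by
  rw [integral_map (measurable_inv.mul_const x).aemeasurable hψ.aestronglyMeasurable,
    show (fun y => ENNReal.ofReal (f y)) = fun y => ((f y).toNNReal : ℝ≥0∞) from rfl,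
    integral_withDensity_eq_integral_smul hf.real_toNNReal]
  refine integral_congr_ae (Eventually.of_forall fun y => ?_)
  simp only [NNReal.smul_def, Real.coe_toNNReal _ (hfpos y), Complex.real_smul]

theorem tendsto_conv_ofReal_apply [MeasurableMul₂ G] [SigmaFinite μ] [μ.IsMulLeftInvariant]
    {ι : Type*} {l : Filter ι} {φ : ι → G → ℂ}
    (hconv : ∀ h : G → ℂ, Integrable h μ →
      Tendsto (fun i => ∫ x, φ i x * h x ∂μ) l (𝓝 (∫ x, h x ∂μ)))
    (hφ : ∀ i, Measurable (φ i)) {f : G → ℝ} (hf : Measurable f) (hfi : Integrable f μ)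
    (hfpos : ∀ x, 0 ≤ f x) (x : G) :
    Tendsto (fun i => conv μ (fun y => (f y : ℂ)) (φ i) x) l (𝓝 (∫ y, f y ∂μ : ℝ)) := by
  set ρ := μ.withDensity fun y => ENNReal.ofReal (f y)
  have : IsFiniteMeasure ρ := isFiniteMeasure_withDensity_ofReal hfi.2
  have hT : Measurable fun y : G => y⁻¹ * x := measurable_inv.mul_const x
  have hρμ : ρ.map (·⁻¹ * x) ≪ μ :=
    ((withDensity_absolutelyContinuous μ _).map hT).trans
      ((quasiMeasurePreserving_mul_right μ x).comp
        (quasiMeasurePreserving_inv μ)).absolutelyContinuous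
  have hmass : (ρ.map (·⁻¹ * x)).real Set.univ = ∫ y, f y ∂μ := by
    rw [map_measureReal_apply hT MeasurableSet.univ, Set.preimage_univ, measureReal_def,
      withDensity_apply _ MeasurableSet.univ, Measure.restrict_univ,
      integral_eq_lintegral_of_nonneg_ae (Eventually.of_forall hfpos) hf.aestronglyMeasurable]
  simp_rw [conv_ofReal_eq_integral_map_withDensity μ hf hfpos (hφ _), ← hmass]
  exact tendsto_integral_of_absolutelyContinuous hconv hρμ

end MeasurableGroup

theorem apply_mul_sub_apply_eq_zero_of_notMem {G E : Type*} [Group G] [TopologicalSpace G]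
    [AddGroup E] {f : G → E} {W : Set G} (hW : (1 : G) ∈ W) {g u : G} (hg : g ∈ W)
    (hu : u ∉ W⁻¹ * tsupport f) :
    f (g * u) - f u = 0 := by
  have h1 : f u = 0 := image_eq_zero_of_notMem_tsupport fun hmem =>
    hu (Set.mem_mul.mpr ⟨1, by simpa using hW, u, hmem, one_mul u⟩)
  have h2 : f (g * u) = 0 := image_eq_zero_of_notMem_tsupport fun hmem =>
    hu (Set.mem_mul.mpr ⟨g⁻¹, Set.inv_mem_inv.mpr hg, g * u, hmem, inv_mul_cancel_left g u⟩)
  rw [h1, h2, sub_zero]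

section TopologicalGroup

variable {G : Type*} [Group G] [TopologicalSpace G] [IsTopologicalGroup G]

theorem HasCompactSupport.eventually_forall_dist_mul_left_lt {E : Type*} [PseudoMetricSpace E]
    [Zero E] {f : G → E} (hf : HasCompactSupport f) (hfc : Continuous f) {ε : ℝ} (hε : 0 < ε) :
    ∀ᶠ g in 𝓝 1, ∀ u, dist (f (g * u)) (f u) < ε := by
  -- In the right uniformity, entourages are `{(u, v) | v * u⁻¹ ∈ V}`, and `(g * u) * u⁻¹ = g`.
  let _ := IsTopologicalGroup.rightUniformSpace G
  obtain ⟨V, hV, hVε⟩ := mem_comap.1 <|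
    hf.uniformContinuous_of_continuous hfc (Metric.dist_mem_uniformity hε)
  filter_upwards [hV] with g hg u
  rw [dist_comm]
  exact hVε (a := (u, g * u)) (show (g * u) * u⁻¹ ∈ V by rwa [mul_inv_cancel_right])

variable [MeasurableSpace G] (μ : Measure G) [IsFiniteMeasureOnCompacts μ]

theorem HasCompactSupport.tendsto_integral_norm_mul_left_sub [WeaklyLocallyCompactSpace G]
    {E : Type*} [NormedAddCommGroup E] {f : G → E} (hf : HasCompactSupport f)
    (hfc : Continuous f) :
    Tendsto (fun g => ∫ u, ‖f (g * u) - f u‖ ∂μ) (𝓝 1) (𝓝 0) := by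
  obtain ⟨W, hWc, hW1⟩ := exists_compact_mem_nhds (1 : G)
  set S := W⁻¹ * tsupport f
  have hS : μ S < ⊤ := (hWc.inv.mul hf).measure_lt_top
  rw [Metric.tendsto_nhds]
  intro ε hε
  have hδ : 0 < ε / (μ.real S + 1) := by positivity
  filter_upwards [hW1, hf.eventually_forall_dist_mul_left_lt hfc hδ] with g hgW hg
  have hvanish (u) (hu : u ∉ S) : ‖f (g * u) - f u‖ = 0 := by
    rw [apply_mul_sub_apply_eq_zero_of_notMem (mem_of_mem_nhds hW1) hgW hu, norm_zero]
  rw [dist_zero_right, ← setIntegral_eq_integral_of_forall_compl_eq_zero hvanish]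
  calc ‖∫ u in S, ‖f (g * u) - f u‖ ∂μ‖ ≤ ε / (μ.real S + 1) * μ.real S :=
        norm_setIntegral_le_of_norm_le_const hS fun u _ => by
          simpa [← dist_eq_norm] using (hg u).le
    _ < ε := by
        rw [div_mul_eq_mul_div, div_lt_iff₀ (by positivity)]
        nlinarith

variable [BorelSpace G] [μ.IsMulLeftInvariant] {f : G → ℂ}

theorem norm_conv_mul_sub_conv_le (hf : HasCompactSupport f) (hfc : Continuous f)
    {ψ : G → ℂ} (hψ : Measurable ψ) {M : ℝ} (hM : ∀ x, ‖ψ x‖ ≤ M) (g x : G) :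
    ‖conv μ f ψ (g * x) - conv μ f ψ x‖ ≤ M * ∫ u, ‖f (g * u) - f u‖ ∂μ := by
  have hψx : AEStronglyMeasurable (fun u => ψ (u⁻¹ * x)) μ :=
    (hψ.comp (measurable_inv.mul_const x)).aestronglyMeasurable
  have hf_int (g₀ : G) : Integrable (fun u => f (g₀ * u)) μ :=
    (hfc.comp (continuous_const_mul g₀)).integrable_of_hasCompactSupport
      (hf.comp_homeomorph (Homeomorph.mulLeft g₀))
  have hint (g₀ : G) : Integrable (fun u => f (g₀ * u) * ψ (u⁻¹ * x)) μ :=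
    (hf_int g₀).mul_bdd hψx (Eventually.of_forall fun u => hM _)
  have htranslate : conv μ f ψ (g * x) = ∫ u, f (g * u) * ψ (u⁻¹ * x) ∂μ := by
    rw [conv, ← integral_mul_left_eq_self _ g]
    simp only [mul_inv_rev, mul_assoc, inv_mul_cancel_left]
  calc ‖conv μ f ψ (g * x) - conv μ f ψ x‖
      = ‖∫ u, (f (g * u) - f u) * ψ (u⁻¹ * x) ∂μ‖ := by
        rw [htranslate, conv, ← integral_sub (hint g) (by simpa using hint 1)]
        simp only [sub_mul]
    _ ≤ ∫ u, M * ‖f (g * u) - f u‖ ∂μ := by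
        refine norm_integral_le_of_norm_le ?_ (Eventually.of_forall fun u => ?_)
        · exact ((hf_int g).sub (by simpa using hf_int 1)).norm.const_mul M
        · rw [norm_mul, mul_comm]
          exact mul_le_mul_of_nonneg_right (hM _) (norm_nonneg _)
    _ = M * ∫ u, ‖f (g * u) - f u‖ ∂μ := integral_const_mul M _

theorem equicontinuous_conv [WeaklyLocallyCompactSpace G] (hf : HasCompactSupport f)
    (hfc : Continuous f) {ι : Type*} {φ : ι → G → ℂ} (hφ : ∀ i, Measurable (φ i)) {M : ℝ}
    (hM : ∀ i x, ‖φ i x‖ ≤ M) : Equicontinuous fun i => conv μ f (φ i) := by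
  intro x₀
  rw [Metric.equicontinuousAt_iff_right]
  intro ε hε
  have hsmall : ∀ᶠ g in 𝓝 (1 : G), M * ∫ u, ‖f (g * u) - f u‖ ∂μ < ε := by
    simpa using ((hf.tendsto_integral_norm_mul_left_sub μ hfc).const_mul M).eventually
      (gt_mem_nhds (by rwa [mul_zero]))
  have hshift : Tendsto (fun x => x * x₀⁻¹) (𝓝 x₀) (𝓝 1) := by
    simpa using (continuous_mul_const x₀⁻¹).tendsto x₀
  filter_upwards [hshift.eventually hsmall] with x hx i
  calc dist (conv μ f (φ i) x₀) (conv μ f (φ i) x)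
      = ‖conv μ f (φ i) (x * x₀⁻¹ * x₀) - conv μ f (φ i) x₀‖ := by
        rw [inv_mul_cancel_right, dist_comm, dist_eq_norm]
    _ ≤ M * ∫ u, ‖f (x * x₀⁻¹ * u) - f u‖ ∂μ :=
        norm_conv_mul_sub_conv_le μ hf hfc (hφ i) (hM i) _ _
    _ < ε := hx

end TopologicalGroup

theorem tendstoUniformlyOn_conv_of_weakStar_general
    {G : Type*} [Group G] [TopologicalSpace G] [IsTopologicalGroup G]
    [LocallyCompactSpace G] [SecondCountableTopology G]
    [MeasurableSpace G] [BorelSpace G] (μ : Measure G) [μ.IsHaarMeasure]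
    {ι : Type*} (l : Filter ι) (φ : ι → G → ℂ) (M : ℝ)
    (hmeas : ∀ i, Measurable (φ i)) (hbdd : ∀ i x, ‖φ i x‖ ≤ M)
    (hconv : ∀ h : G → ℂ, Integrable h μ →
      Tendsto (fun i => ∫ x, φ i x * h x ∂μ) l (𝓝 (∫ x, h x ∂μ)))
    (f : G → ℝ) (hfc : Continuous f) (hfs : HasCompactSupport f)
    (hfpos : ∀ x, 0 ≤ f x) (hfint : ∫ x, f x ∂μ = 1)
    (K : Set G) (hK : IsCompact K) :
    TendstoUniformlyOn (fun i x => ∫ y, (f y : ℂ) * φ i (y⁻¹ * x) ∂μ)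
      (fun _ => 1) l K := by
  have hequi : Equicontinuous fun i => conv μ (fun y => (f y : ℂ)) (φ i) :=
    equicontinuous_conv μ (hfs.comp_left Complex.ofReal_zero)
      (Complex.continuous_ofReal.comp hfc) hmeas hbdd
  have hpointwise : Tendsto (fun i => conv μ (fun y => (f y : ℂ)) (φ i)) l (𝓝 fun _ => 1) :=
    tendsto_pi_nhds.2 fun x => by
      simpa [hfint] using tendsto_conv_ofReal_apply μ hconv hmeas hfc.measurable
        (hfc.integrable_of_hasCompactSupport hfs) hfpos x
  exact hequi.tendstoUniformlyOn_of_tendsto hpointwise hK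

/-- If a uniformly bounded net of measurable functions converges to `1`
in the weak-* topology `σ(L^∞, L¹)`, then its convolutions with a fixed nonnegative
continuous compactly supported function of integral one converge to `1` uniformly on
compact subsets. -/
theorem tendstoUniformlyOn_conv_of_weakStar
    {G : Type*} [Group G] [TopologicalSpace G] [IsTopologicalGroup G]
    [LocallyCompactSpace G] [SecondCountableTopology G]
    [MeasurableSpace G] [BorelSpace G] (μ : Measure G) [μ.IsHaarMeasure]
    {ι : Type*} (l : Filter ι) [l.NeBot] (φ : ι → G → ℂ) (M : ℝ)
    (hmeas : ∀ i, Measurable (φ i)) (hbdd : ∀ i x, ‖φ i x‖ ≤ M)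
    (hconv : ∀ h : G → ℂ, Integrable h μ →
      Tendsto (fun i => ∫ x, φ i x * h x ∂μ) l (𝓝 (∫ x, h x ∂μ)))
    (f : G → ℝ) (hfc : Continuous f) (hfs : HasCompactSupport f)
    (hfpos : ∀ x, 0 ≤ f x) (hfint : ∫ x, f x ∂μ = 1)
    (K : Set G) (hK : IsCompact K) :
    TendstoUniformlyOn (fun i x => ∫ y, (f y : ℂ) * φ i (y⁻¹ * x) ∂μ)
      (fun _ => 1) l K :=
  tendstoUniformlyOn_conv_of_weakStar_general μ l φ M hmeas hbdd hconv f hfc hfs hfpos hfint K hK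
end

section
/- Let G be a locally compact second countable group, H a closed subgroup of G, d ≥ 2 an integer, and C > 0. Suppose that for every compact subset K ⊆ G and every ε > 0 there exists φ ∈ C_c(G) admitting a factorization of length d (over G) of constant at most C such that sup_{x∈K} |φ(x) − 1| < ε. Then for every compact subset L ⊆ H and every ε > 0 there exists ψ ∈ C_c(H) admitting a factorization of length d (over H) of constant at most C such that sup_{x∈L} |ψ(x) − 1| < ε. (Consequently Λ_{CH}(H, d) ≤ Λ_{CH}(G, d).) -/
open ComplexConjugate Filter Topology
open scoped ComplexInnerProductSpace

universe u

open MeasureTheory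

namespace Factorization

variable {d : ℕ} {G G' : Type*} [Group G] [Group G'] {φ : G → ℂ}

noncomputable def comp (F : Factorization.{0} d G φ) (f : G' →* G) :
    Factorization.{0} d G' (φ ∘ f) where
  H := F.H
  e0 := F.e0
  ed := F.ed
  xi i x := F.xi i (f x)
  bdd i := (F.bdd i).imp fun _ hM x => hM (f x)
  factor x := by
    simpa only [Function.comp_apply, map_list_prod, List.map_ofFn] using F.factor (f ∘ x)

theorem const_comp_le (F : Factorization.{0} d G φ) (f : G' →* G) :
    (F.comp f).const ≤ F.const := by
  refine Finset.prod_le_prod (fun i _ => Real.iSup_nonneg fun _ => norm_nonneg _) fun i _ => ?_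
  obtain ⟨M, hM⟩ := F.bdd i
  have hbdd : BddAbove (Set.range fun x : G => ‖F.xi i x‖) := ⟨M, Set.forall_mem_range.2 hM⟩
  exact Real.iSup_le (fun x => le_ciSup hbdd (f x)) (Real.iSup_nonneg fun _ => norm_nonneg _)

end Factorization

theorem mdWA_approx_of_closedSubgroup_general
    {G : Type*} [Group G] [TopologicalSpace G]
    (d : ℕ) (C : ℝ)
    (H : Subgroup G) (hH : IsClosed (H : Set G))
    (h : ∀ K : Set G, IsCompact K → ∀ ε > (0 : ℝ),
      ∃ φ : G → ℂ, Continuous φ ∧ HasCompactSupport φ ∧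
        (∃ F : Factorization.{0} d G φ, F.const ≤ C) ∧
        ∀ x ∈ K, ‖φ x - 1‖ < ε) :
    ∀ L : Set H, IsCompact L → ∀ ε > (0 : ℝ),
      ∃ ψ : H → ℂ, Continuous ψ ∧ HasCompactSupport ψ ∧
        (∃ F : Factorization.{0} d H ψ, F.const ≤ C) ∧
        ∀ x ∈ L, ‖ψ x - 1‖ < ε := by
  intro L hL ε hε
  obtain ⟨φ, hcont, hsupp, ⟨F, hF⟩, happrox⟩ :=
    h (Subtype.val '' L) (hL.image continuous_subtype_val) ε hε
  exact ⟨φ ∘ H.subtype, hcont.comp continuous_subtype_val,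
    hsupp.comp_isClosedEmbedding hH.isClosedEmbedding_subtypeVal,
    ⟨F.comp H.subtype, (F.const_comp_le H.subtype).trans hF⟩,
    fun x hx => happrox _ ⟨x, hx, rfl⟩⟩

/-- The compactly-supported `M_d`-approximation condition with constant
`C` passes from a locally compact second countable group to its closed subgroups; hence
`Λ_CH(H, d) ≤ Λ_CH(G, d)`. -/
theorem mdWA_approx_of_closedSubgroup
    {G : Type*} [Group G] [TopologicalSpace G] [IsTopologicalGroup G]
    [LocallyCompactSpace G] [SecondCountableTopology G]
    (d : ℕ) (hd : 2 ≤ d) (C : ℝ) (hC : 0 < C)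
    (H : Subgroup G) (hH : IsClosed (H : Set G))
    (h : ∀ K : Set G, IsCompact K → ∀ ε > (0 : ℝ),
      ∃ φ : G → ℂ, Continuous φ ∧ HasCompactSupport φ ∧
        (∃ F : Factorization.{0} d G φ, F.const ≤ C) ∧
        ∀ x ∈ K, ‖φ x - 1‖ < ε) :
    ∀ L : Set H, IsCompact L → ∀ ε > (0 : ℝ),
      ∃ ψ : H → ℂ, Continuous ψ ∧ HasCompactSupport ψ ∧
        (∃ F : Factorization.{0} d H ψ, F.const ≤ C) ∧
        ∀ x ∈ L, ‖ψ x - 1‖ < ε :=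
  mdWA_approx_of_closedSubgroup_general d C H hH h
end
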